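/- (Theorem 3.1) Let K be an n×n real matrix that is diagonalizable with negative spectrum, i.e. K = QΓQ⁻¹ for some invertible real matrix Q and real diagonal matrix Γ all of whose diagonal entries are negative. Set A := I_{mn} − (Iinv·D) ⊗ K and P := I_{mn} − (S·D) ⊗ K, where ⊗ is the Kronecker product. Then P is invertible, the polynomial (X − 1)^{n(m−1)} divides the characteristic polynomial of P⁻¹A (so P⁻¹A has at least n(m−1) unit eigenvalues and at most n non-unit eigenvalues), and every complex eigenvalue of P⁻¹A is a real number lying in [1, ∞). -/

import Mathlib

/-!
Since `sinc` is even, `Iinv + Iinvᵀ = e eᵀ`, so `Iinv D = S D + e wᵀ` with `w = Dᵀe / 2`.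
Conjugation by `1 ⊗ Q` turns every matrix `1 - B ⊗ K` into the block diagonal matrix with
blocks `1 - γⱼ B`. The blocks `1 - γ S D` of `P` are invertible: if `(1 - γ S D) x = 0` then
`xᵀ D x = γ (S D x)ᵀ (D x) = 0` because `S` is skew. The corresponding block of `P⁻¹ A` is the
rank-one perturbation `1 - yⱼ wᵀ` of the identity, with `yⱼ = γⱼ (1 - γⱼ S D)⁻¹ e`, whose
characteristic polynomial is `(X - 1)^(m-1) (X - 1 + wᵀ yⱼ)`. Finally `wᵀ yⱼ = (γⱼ / 2) zᵀ D z ≤ 0`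
for `z = (1 - γⱼ S D)⁻¹ e`, by the same skew-symmetry argument.
-/

open Matrix

/-- The sinc integrand `sin(πt)/(πt)`, extended by the value 1 at `t = 0`. -/
noncomputable def sincFn (t : ℝ) : ℝ :=
  if t = 0 then 1 else Real.sin (Real.pi * t) / (Real.pi * t)

/-- The `m × m` Toeplitz matrix `Iinv(k,l) = 1/2 + ∫₀^{k-l} sin(πt)/(πt) dt`. -/
noncomputable def IinvMat (m : ℕ) : Matrix (Fin m) (Fin m) ℝ :=
  fun k l => 1 / 2 + ∫ t in (0 : ℝ)..((k : ℝ) - (l : ℝ)), sincFn t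

/-- The skew-symmetric part `S = (Iinv - Iinvᵀ)/2`. -/
noncomputable def Smat (m : ℕ) : Matrix (Fin m) (Fin m) ℝ :=
  (2 : ℝ)⁻¹ • (IinvMat m - (IinvMat m)ᵀ)

/-- The all-ones vector `e ∈ ℝ^m`. -/
def eVec (m : ℕ) : Fin m → ℝ := fun _ => 1

open Polynomial
open scoped Kronecker

lemma sincFn_neg (t : ℝ) : sincFn (-t) = sincFn t := by
  unfold sincFn
  rcases eq_or_ne t 0 with rfl | ht
  · simp
  · rw [if_neg (neg_ne_zero.mpr ht), if_neg ht, mul_neg, Real.sin_neg, neg_div_neg_eq]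

lemma integral_sincFn_neg (a : ℝ) :
    ∫ t in (0 : ℝ)..(-a), sincFn t = -∫ t in (0 : ℝ)..a, sincFn t := by
  have h := intervalIntegral.integral_comp_neg (a := (0 : ℝ)) (b := a) sincFn
  simp only [sincFn_neg, neg_zero] at h
  rw [h, intervalIntegral.integral_symm]

lemma IinvMat_apply_add_apply_swap (m : ℕ) (k l : Fin m) :
    IinvMat m k l + IinvMat m l k = 1 := by
  have h : (l : ℝ) - k = -((k : ℝ) - l) := by ring
  simp only [IinvMat, h, integral_sincFn_neg]
  ring

lemma IinvMat_eq_Smat_add (m : ℕ) :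
    IinvMat m = Smat m + (2 : ℝ)⁻¹ • vecMulVec (eVec m) (eVec m) := by
  ext k l
  have h := IinvMat_apply_add_apply_swap m k l
  simp only [Smat, Matrix.add_apply, Matrix.smul_apply, Matrix.sub_apply, transpose_apply,
    vecMulVec_apply, eVec, smul_eq_mul]
  linarith

lemma IinvMat_mul_eq_Smat_mul_add_vecMulVec (m : ℕ) (D : Matrix (Fin m) (Fin m) ℝ) :
    IinvMat m * D = Smat m * D + vecMulVec (eVec m) ((2 : ℝ)⁻¹ • (eVec m ᵥ* D)) := by
  rw [IinvMat_eq_Smat_add, add_mul, smul_mul, vecMulVec_mul, vecMulVec_smul]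

lemma Smat_transpose (m : ℕ) : (Smat m)ᵀ = -Smat m := by
  ext k l
  simp only [Smat, transpose_apply, Matrix.smul_apply, Matrix.sub_apply, Matrix.neg_apply,
    smul_eq_mul]
  ring

section Charpoly

variable {R : Type*} [CommRing R] {ι : Type*} [Fintype ι] [DecidableEq ι]

theorem charpoly_one_sub_vecMulVec [Nonempty ι] (u v : ι → R) :
    (1 - vecMulVec u v).charpoly = (X - 1) ^ (Fintype.card ι - 1) * (X - C (1 - u ⬝ᵥ v)) := by
  have h : 1 - vecMulVec u v = vecMulVec (-u) v - scalar ι (-1 : R) := by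
    simp [sub_eq_add_neg, add_comm]
  obtain ⟨k, hk⟩ : ∃ k, Fintype.card ι = k + 1 :=
    Nat.exists_eq_succ_of_ne_zero Fintype.card_ne_zero
  rw [h, charpoly_sub_scalar, charpoly_vecMulVec, hk]
  simp only [neg_dotProduct, sub_comp, pow_comp, smul_comp, X_comp, map_neg, map_one]
  rw [Nat.add_sub_cancel, smul_eq_C_mul, map_neg, map_sub, map_one, pow_succ]
  ring

theorem charpoly_blockDiagonal {o : Type*} [Fintype o] [DecidableEq o] (M : o → Matrix ι ι R) :
    (blockDiagonal M).charpoly = ∏ j, (M j).charpoly := by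
  have h : charmatrix (blockDiagonal M) = blockDiagonal fun j => charmatrix (M j) := by
    ext ⟨i, j⟩ ⟨i', j'⟩
    by_cases hj : j = j' <;> by_cases hi : i = i' <;> simp [blockDiagonal_apply, hi, hj]
  rw [charpoly, h, det_blockDiagonal]
  rfl

theorem isRoot_charpoly_map_of_mulVec_eq_smul {K : Type*} [Field K] (M : Matrix ι ι R)
    (f : R →+* K) {μ : K} {ξ : ι → K} (hξ : ξ ≠ 0) (h : M.map f *ᵥ ξ = μ • ξ) :
    (M.charpoly.map f).IsRoot μ := by
  rw [← charpoly_map, IsRoot, eval_charpoly, ← exists_mulVec_eq_zero_iff]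
  refine ⟨ξ, hξ, ?_⟩
  rw [sub_mulVec, h, scalar_apply, sub_eq_zero]
  ext i
  simp [mulVec_diagonal]

theorem eq_one_or_eq_of_isRoot_map_prod {K : Type*} [Field K] {o : Type*} [Fintype o]
    (f : R →+* K) (k : ℕ) (μ : o → R) {lam : K}
    (h : ((∏ j, (X - 1) ^ k * (X - C (μ j))).map f).IsRoot lam) :
    lam = 1 ∨ ∃ j, lam = f (μ j) := by
  rw [IsRoot, Polynomial.map_prod, eval_prod, Finset.prod_eq_zero_iff] at h
  obtain ⟨j, -, hj⟩ := h
  simp only [Polynomial.map_mul, Polynomial.map_pow, Polynomial.map_sub, map_X,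
    Polynomial.map_one, map_C, eval_mul, eval_pow, eval_sub, eval_X, eval_one, eval_C,
    mul_eq_zero, pow_eq_zero_iff', sub_eq_zero] at hj
  exact hj.imp And.left fun h => ⟨j, h⟩

theorem mul_one_sub_vecMulVec_inv_mulVec {N : Matrix ι ι R} (hN : IsUnit N) (u w : ι → R) :
    N * (1 - vecMulVec (N⁻¹ *ᵥ u) w) = N - vecMulVec u w := by
  rw [mul_sub, mul_one, mul_vecMulVec, mulVec_mulVec,
    mul_nonsing_inv _ ((isUnit_iff_isUnit_det _).1 hN), one_mulVec]

end Charpoly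

section Kronecker

variable {R : Type*} [CommRing R] {m n : Type*} [Fintype m] [DecidableEq m] [Fintype n]
  [DecidableEq n]

theorem one_sub_kronecker_eq_conj_blockDiagonal (B : Matrix m m R) {Q : Matrix n n R}
    (hQ : IsUnit Q) (Γ : n → R) :
    1 - B ⊗ₖ (Q * diagonal Γ * Q⁻¹) =
      (1 ⊗ₖ Q) * blockDiagonal (fun j => 1 - Γ j • B) * (1 ⊗ₖ Q)⁻¹ := by
  have hQ' : Q * Q⁻¹ = 1 := mul_nonsing_inv Q ((isUnit_iff_isUnit_det Q).1 hQ)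
  have hblock : blockDiagonal (fun j => 1 - Γ j • B) = 1 - B ⊗ₖ diagonal Γ := by
    rw [kronecker_diagonal, ← blockDiagonal_one, ← blockDiagonal_sub]
    simp only [op_smul_eq_smul]
    rfl
  rw [hblock, inv_kronecker, inv_one, mul_sub, sub_mul, mul_one, ← mul_kronecker_mul,
    ← mul_kronecker_mul, mul_one, one_mul, ← mul_kronecker_mul, mul_one, hQ', one_kronecker_one]

theorem isUnit_one_kronecker {Q : Matrix n n R} (hQ : IsUnit Q) :
    IsUnit ((1 : Matrix m m R) ⊗ₖ Q) := by
  rw [isUnit_iff_isUnit_det, det_kronecker, det_one, one_pow, one_mul]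
  exact ((isUnit_iff_isUnit_det Q).1 hQ).pow _

variable {B : Matrix m m R} {Q : Matrix n n R} {Γ : n → R}

theorem isUnit_one_sub_kronecker (hQ : IsUnit Q) (hB : ∀ j, IsUnit (1 - Γ j • B)) :
    IsUnit (1 - B ⊗ₖ (Q * diagonal Γ * Q⁻¹)) := by
  rw [one_sub_kronecker_eq_conj_blockDiagonal B hQ, isUnit_iff_isUnit_det,
    det_conj (isUnit_one_kronecker hQ), det_blockDiagonal, IsUnit.prod_univ_iff]
  exact fun j => (isUnit_iff_isUnit_det _).1 (hB j)

theorem inv_mul_one_sub_kronecker_eq_conj_blockDiagonal (hQ : IsUnit Q)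
    (hB : ∀ j, IsUnit (1 - Γ j • B)) (C : Matrix m m R) (M : n → Matrix m m R)
    (hM : ∀ j, (1 - Γ j • B) * M j = 1 - Γ j • C) :
    (1 - B ⊗ₖ (Q * diagonal Γ * Q⁻¹))⁻¹ * (1 - C ⊗ₖ (Q * diagonal Γ * Q⁻¹)) =
      (1 ⊗ₖ Q) * blockDiagonal M * (1 ⊗ₖ Q)⁻¹ := by
  have hU := isUnit_one_kronecker (m := m) hQ
  have hC : 1 - C ⊗ₖ (Q * diagonal Γ * Q⁻¹) =
      (1 - B ⊗ₖ (Q * diagonal Γ * Q⁻¹)) * ((1 ⊗ₖ Q) * blockDiagonal M * (1 ⊗ₖ Q)⁻¹) := by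
    rw [one_sub_kronecker_eq_conj_blockDiagonal B hQ,
      one_sub_kronecker_eq_conj_blockDiagonal C hQ, ← funext hM, blockDiagonal_mul]
    simp only [Matrix.mul_assoc, nonsing_inv_mul_cancel_left _ _ ((isUnit_iff_isUnit_det _).1 hU)]
  rw [hC, nonsing_inv_mul_cancel_left _ _
    ((isUnit_iff_isUnit_det _).1 (isUnit_one_sub_kronecker hQ hB))]

end Kronecker

section Skew

variable {ι : Type*} [Fintype ι] {S D : Matrix ι ι ℝ}

theorem mulVec_dotProduct_self_of_transpose_eq_neg (hS : Sᵀ = -S) (w : ι → ℝ) :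
    (S *ᵥ w) ⬝ᵥ w = 0 := by
  have h : (S *ᵥ w) ⬝ᵥ w = -((S *ᵥ w) ⬝ᵥ w) := by
    calc (S *ᵥ w) ⬝ᵥ w = (w ᵥ* S) ⬝ᵥ w := by rw [dotProduct_comm, dotProduct_mulVec]
      _ = -((S *ᵥ w) ⬝ᵥ w) := by rw [← mulVec_transpose, hS, neg_mulVec, neg_dotProduct]
  linarith

variable [DecidableEq ι]

theorem one_sub_smul_mul_mulVec_dotProduct (hS : Sᵀ = -S) (γ : ℝ) (x : ι → ℝ) :
    ((1 - γ • (S * D)) *ᵥ x) ⬝ᵥ (D *ᵥ x) = x ⬝ᵥ (D *ᵥ x) := by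
  rw [sub_mulVec, one_mulVec, smul_mulVec, ← mulVec_mulVec, sub_dotProduct, smul_dotProduct,
    mulVec_dotProduct_self_of_transpose_eq_neg hS, smul_zero, sub_zero]

theorem isUnit_one_sub_smul_mul (hS : Sᵀ = -S) (hD : D.PosDef) (γ : ℝ) :
    IsUnit (1 - γ • (S * D)) := by
  rw [isUnit_iff_isUnit_det, isUnit_iff_ne_zero, Ne, ← exists_mulVec_eq_zero_iff]
  rintro ⟨x, hx, hker⟩
  have hpos := hD.dotProduct_mulVec_pos hx
  rw [star_trivial, ← one_sub_smul_mul_mulVec_dotProduct hS γ, hker, zero_dotProduct] at hpos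
  exact hpos.false

theorem inv_mulVec_dotProduct_vecMul_nonneg (hS : Sᵀ = -S) (hD : D.PosDef) (γ : ℝ)
    (u : ι → ℝ) : 0 ≤ ((1 - γ • (S * D))⁻¹ *ᵥ u) ⬝ᵥ (u ᵥ* D) := by
  set z := (1 - γ • (S * D))⁻¹ *ᵥ u
  have hz : (1 - γ • (S * D)) *ᵥ z = u := by
    rw [mulVec_mulVec, mul_nonsing_inv _
      ((isUnit_iff_isUnit_det _).1 (isUnit_one_sub_smul_mul hS hD γ)), one_mulVec]
  calc 0 ≤ star z ⬝ᵥ (D *ᵥ z) := hD.posSemidef.dotProduct_mulVec_nonneg z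
    _ = ((1 - γ • (S * D)) *ᵥ z) ⬝ᵥ (D *ᵥ z) := by
      rw [star_trivial, one_sub_smul_mul_mulVec_dotProduct hS]
    _ = z ⬝ᵥ (u ᵥ* D) := by rw [hz, dotProduct_mulVec, dotProduct_comm]

end Skew

open Polynomial Kronecker in
theorem stmt8_general (m n : ℕ) (hm : 1 ≤ m) (d : Fin m → ℝ) (hd : ∀ j, 0 < d j)
    (K Q : Matrix (Fin n) (Fin n) ℝ) (Γ : Fin n → ℝ) (hQ : IsUnit Q)
    (hΓ : ∀ j, Γ j < 0) (hK : K = Q * Matrix.diagonal Γ * Q⁻¹) :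
    let D : Matrix (Fin m) (Fin m) ℝ := Matrix.diagonal d
    let A : Matrix (Fin m × Fin n) (Fin m × Fin n) ℝ := 1 - (IinvMat m * D) ⊗ₖ K
    let P : Matrix (Fin m × Fin n) (Fin m × Fin n) ℝ := 1 - (Smat m * D) ⊗ₖ K
    IsUnit P ∧
      ((X - 1) ^ (n * (m - 1)) ∣ (P⁻¹ * A).charpoly) ∧
      ∀ (lam : ℂ) (ξ : Fin m × Fin n → ℂ), ξ ≠ 0 →
        ((P⁻¹ * A).map Complex.ofReal).mulVec ξ = lam • ξ →
        lam.im = 0 ∧ 1 ≤ lam.re := by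
  intro D A P
  subst hK
  have hS := Smat_transpose m
  have hD : D.PosDef := posDef_diagonal_iff.2 hd
  have : Nonempty (Fin m) := ⟨⟨0, hm⟩⟩
  have hblock j : IsUnit (1 - Γ j • (Smat m * D)) := isUnit_one_sub_smul_mul hS hD (Γ j)
  set w : Fin m → ℝ := (2 : ℝ)⁻¹ • (eVec m ᵥ* D)
  set y : Fin n → Fin m → ℝ := fun j => (1 - Γ j • (Smat m * D))⁻¹ *ᵥ (Γ j • eVec m)
  have hfactor j : (1 - Γ j • (Smat m * D)) * (1 - vecMulVec (y j) w) =
      1 - Γ j • (IinvMat m * D) := by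
    rw [mul_one_sub_vecMulVec_inv_mulVec (hblock j), IinvMat_mul_eq_Smat_mul_add_vecMulVec,
      smul_add, smul_vecMulVec, sub_sub]
  have hyw j : y j ⬝ᵥ w ≤ 0 := by
    have h := inv_mulVec_dotProduct_vecMul_nonneg hS hD (Γ j) (eVec m)
    simp only [y, w, mulVec_smul, smul_dotProduct, dotProduct_smul, smul_eq_mul]
    nlinarith [hΓ j]
  have hchar : (P⁻¹ * A).charpoly = ∏ j, (X - 1) ^ (m - 1) * (X - C (1 - y j ⬝ᵥ w)) := by
    rw [inv_mul_one_sub_kronecker_eq_conj_blockDiagonal hQ hblock _ _ hfactor,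
      ← (isUnit_one_kronecker hQ).unit_spec, charpoly_units_conj, charpoly_blockDiagonal]
    simp only [charpoly_one_sub_vecMulVec, Fintype.card_fin]
  refine ⟨isUnit_one_sub_kronecker hQ hblock, ?_, fun lam ξ hξ heig => ?_⟩
  · rw [hchar, Finset.prod_mul_distrib, Finset.prod_const, Finset.card_univ, Fintype.card_fin,
      ← pow_mul, mul_comm]
    exact dvd_mul_right _ _
  · have hroot := isRoot_charpoly_map_of_mulVec_eq_smul _ Complex.ofRealHom hξ heig
    rw [hchar] at hroot
    obtain rfl | ⟨j, rfl⟩ := eq_one_or_eq_of_isRoot_map_prod _ _ _ hroot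
    · simp
    · simpa using hyw j

open Polynomial Kronecker in
theorem stmt8 (m n : ℕ) (hm : 1 ≤ m) (hn : 1 ≤ n) (d : Fin m → ℝ) (hd : ∀ j, 0 < d j)
    (K Q : Matrix (Fin n) (Fin n) ℝ) (Γ : Fin n → ℝ) (hQ : IsUnit Q)
    (hΓ : ∀ j, Γ j < 0) (hK : K = Q * Matrix.diagonal Γ * Q⁻¹) :
    let D : Matrix (Fin m) (Fin m) ℝ := Matrix.diagonal d
    let A : Matrix (Fin m × Fin n) (Fin m × Fin n) ℝ := 1 - (IinvMat m * D) ⊗ₖ K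
    let P : Matrix (Fin m × Fin n) (Fin m × Fin n) ℝ := 1 - (Smat m * D) ⊗ₖ K
    IsUnit P ∧
      ((X - 1) ^ (n * (m - 1)) ∣ (P⁻¹ * A).charpoly) ∧
      ∀ (lam : ℂ) (ξ : Fin m × Fin n → ℂ), ξ ≠ 0 →
        ((P⁻¹ * A).map Complex.ofReal).mulVec ξ = lam • ξ →
        lam.im = 0 ∧ 1 ≤ lam.re :=
  stmt8_general m n hm d hd K Q Γ hQ hΓ hK
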